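/- arXiv:1510.04180 — 4 statements merged into one kernel-verified Lean document; each statement's English description precedes it below -/
import Mathlib

section
/- Let I be a finite set, α a partition of I, β a partition finer than α, and q a probability vector on α with q_A > 0 for all A ∈ α. Let r be a probability vector on β extending q. Then Δ^q(β, r) ≤ Σ_{A∈α} q_A · N^β(A) · hz_A(β) − 1, where hz_A(β) = Σ_{B∈β, B⊆A} (r_B/q_A)² is the homozygosity of atom A. -/
open Finset

/-- `α` is a partition of the finite set `I`: atoms are nonempty, pairwise
disjoint, and cover `I`. -/
def IsPartition {I : Type*} [Fintype I] [DecidableEq I] (α : Finset (Finset I)) : Prop :=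
  (∀ A ∈ α, A.Nonempty) ∧
  (∀ A ∈ α, ∀ A' ∈ α, A ≠ A' → Disjoint A A') ∧
  (∀ i : I, ∃ A ∈ α, i ∈ A)

/-!
Both entropies split over the atoms `A` of `α`. On `A` the maximal extension is the constant
`c = q_A / N^β(A)`, so the contribution of `A` to `Δ` is `∑_{B ⊆ A} r_B log (r_B / c)`, a
Kullback–Leibler divergence; bounding it by the χ²-divergence via `log x ≤ x - 1` gives
`∑_{B ⊆ A} r_B² / c - q_A = q_A N^β(A) hz_A(β) - q_A`. Summing over `A` with `∑ q_A = 1` yields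
the bound.
-/

namespace Real

lemma mul_log_sub_mul_log_le {x c : ℝ} (hx : 0 ≤ x) (hc : 0 < c) :
    x * log x - x * log c ≤ x ^ 2 / c - x := by
  obtain rfl | hx := hx.eq_or_lt
  · simp
  calc x * log x - x * log c = x * log (x / c) := by
        rw [log_div hx.ne' hc.ne']; ring
    _ ≤ x * (x / c - 1) := by gcongr; exact log_le_sub_one_of_pos (by positivity)
    _ = x ^ 2 / c - x := by ring

lemma sum_mul_log_sub_le_sum_sq_div_sub {ι : Type*} {s : Finset ι} {r : ι → ℝ} {c : ℝ}
    (hr : ∀ i ∈ s, 0 ≤ r i) (hc : 0 < c) :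
    ∑ i ∈ s, r i * log (r i) - (∑ i ∈ s, r i) * log c ≤ ∑ i ∈ s, r i ^ 2 / c - ∑ i ∈ s, r i := by
  rw [sum_mul, ← sum_sub_distrib, ← sum_sub_distrib]
  exact sum_le_sum fun i hi => mul_log_sub_mul_log_le (hr i hi) hc

lemma sum_mul_log_sub_sum_mul_log_uniform_le {ι : Type*} {s : Finset ι} {r m : ι → ℝ} {Q : ℝ}
    (hr : ∀ i ∈ s, 0 ≤ r i) (hQ : 0 < Q) (hrQ : ∑ i ∈ s, r i = Q)
    (hm : ∀ i ∈ s, m i = Q / #s) :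
    ∑ i ∈ s, r i * log (r i) - ∑ i ∈ s, m i * log (m i) ≤
      Q * #s * ∑ i ∈ s, (r i / Q) ^ 2 - Q := by
  have hs : s.Nonempty := nonempty_of_sum_ne_zero (hrQ ▸ hQ.ne')
  have hN : (0 : ℝ) < #s := by exact_mod_cast hs.card_pos
  have hm_sum : ∑ i ∈ s, m i * log (m i) = Q * log (Q / #s) := by
    rw [sum_congr rfl fun i hi => by rw [hm i hi], sum_const, nsmul_eq_mul]
    field_simp
  have hsq : Q * #s * ∑ i ∈ s, (r i / Q) ^ 2 = ∑ i ∈ s, r i ^ 2 / (Q / #s) := by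
    rw [mul_sum]
    refine sum_congr rfl fun i _ => ?_
    field_simp
  rw [hm_sum, hsq]
  have := sum_mul_log_sub_le_sum_sq_div_sub hr (div_pos hQ hN)
  rwa [hrQ] at this

end Real

section Fibers

variable {I : Type*} [DecidableEq I] {α β : Finset (Finset I)}

lemma pairwiseDisjoint_filter_subset (hβ : ∀ B ∈ β, B.Nonempty)
    (hα : ∀ A ∈ α, ∀ A' ∈ α, A ≠ A' → Disjoint A A') :
    (α : Set (Finset I)).PairwiseDisjoint fun A => β.filter (· ⊆ A) := by
  intro A hA A' hA' hne
  refine disjoint_left.2 fun B hB hB' => ?_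
  obtain ⟨i, hi⟩ := hβ B (mem_filter.1 hB).1
  exact disjoint_left.1 (hα A hA A' hA' hne) ((mem_filter.1 hB).2 hi) ((mem_filter.1 hB').2 hi)

lemma sum_eq_sum_sum_filter_subset {M : Type*} [AddCommMonoid M] (hβ : ∀ B ∈ β, B.Nonempty)
    (hα : ∀ A ∈ α, ∀ A' ∈ α, A ≠ A' → Disjoint A A') (hfine : ∀ B ∈ β, ∃ A ∈ α, B ⊆ A)
    (f : Finset I → M) :
    ∑ B ∈ β, f B = ∑ A ∈ α, ∑ B ∈ β.filter (· ⊆ A), f B := by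
  have hβ_eq : β = α.biUnion fun A => β.filter (· ⊆ A) := by
    ext B
    simp only [mem_biUnion, mem_filter]
    exact ⟨fun hB => (hfine B hB).imp fun A ⟨hA, hBA⟩ => ⟨hA, hB, hBA⟩,
      fun ⟨_, _, hB, _⟩ => hB⟩
  conv_lhs => rw [hβ_eq]
  exact sum_biUnion (pairwiseDisjoint_filter_subset hβ hα)

end Fibers

/-- `Δ^q(β, r) = h(β, r^M) − h(β, r)` is bounded above by
`Σ_{A∈α} q_A · N^β(A) · hz_A(β) − 1`, where `hz_A(β)` is the homozygosity. -/
theorem Delta_le_homozygosity_bound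
    {I : Type*} [Fintype I] [DecidableEq I]
    (α β : Finset (Finset I)) (q r rM : Finset I → ℝ)
    (hα : IsPartition α) (hβ : IsPartition β)
    (hfine : ∀ B ∈ β, ∃ A ∈ α, B ⊆ A)
    (hq0 : ∀ A ∈ α, 0 < q A) (hq1 : ∑ A ∈ α, q A = 1)
    (hr0 : ∀ B ∈ β, 0 ≤ r B)
    (hext : ∀ A ∈ α, ∑ B ∈ β.filter (fun B' => B' ⊆ A), r B = q A)
    (hrM : ∀ A ∈ α, ∀ B ∈ β, B ⊆ A →
      rM B = q A / ((β.filter (fun B' => B' ⊆ A)).card : ℝ)) :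
    (-∑ B ∈ β, rM B * Real.log (rM B)) - (-∑ B ∈ β, r B * Real.log (r B)) ≤
      (∑ A ∈ α, q A * ((β.filter (fun B' => B' ⊆ A)).card : ℝ) *
        (∑ B ∈ β.filter (fun B' => B' ⊆ A), (r B / q A) ^ 2)) - 1 := by
  have hsplit := sum_eq_sum_sum_filter_subset hβ.1 hα.2.1 hfine (M := ℝ)
  rw [hsplit, hsplit, ← hq1, ← sum_sub_distrib, neg_sub_neg, ← sum_sub_distrib]
  refine sum_le_sum fun A hA => ?_
  refine Real.sum_mul_log_sub_sum_mul_log_uniform_le (fun B hB => hr0 B (mem_filter.1 hB).1)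
    (hq0 A hA) (hext A hA) fun B hB => ?_
  exact hrM A hA B (mem_filter.1 hB).1 (mem_filter.1 hB).2
end

section
/- For all integers s ≥ 0 and t ≥ 0, the integral θ(s, t) = ∫₀¹ xˢ (1−x)ᵗ log x dx satisfies θ(s, t) = −(s! · t! / (s+t+1)!) · (ξ_{s+t+1} − ξ_s), where ξ_n = Σ_{j=1}^n 1/j is the n-th harmonic number (ξ_0 = 0). -/
/-!
Writing `(1 - x)^(t+1) = (1 - x)^t - x (1 - x)^t` gives `θ(s, t+1) = θ(s, t) - θ(s+1, t)`,
and the closed form obeys the same recursion because `ξ_{n+1} = ξ_n + 1/(n+1)`. Both agree at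
`t = 0`, where `θ(s, 0) = -1/(s+1)²` follows from the antiderivative
`x^(s+1) log x / (s+1) - x^(s+1) / (s+1)²`, which is continuous at `0` since `x log x → 0`.
-/

/-- The `n`-th harmonic number `ξ_n = Σ_{j=1}^n 1/j`, with `ξ_0 = 0`. -/
noncomputable def xi (n : ℕ) : ℝ := ∑ j ∈ Finset.range n, (1 : ℝ) / (j + 1)

open Real intervalIntegral Set

lemma xi_succ (n : ℕ) : xi (n + 1) = xi n + 1 / (n + 1) := by
  simp [xi, Finset.sum_range_succ]

lemma Continuous.intervalIntegrable_mul_log {f : ℝ → ℝ} (hf : Continuous f) (a b : ℝ) :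
    IntervalIntegrable (fun x ↦ f x * Real.log x) MeasureTheory.volume a b :=
  intervalIntegrable_log'.continuousOn_mul hf.continuousOn

lemma integral_pow_mul_log (n : ℕ) : ∫ x in (0 : ℝ)..1, x ^ n * log x = -1 / (n + 1) ^ 2 := by
  have hcont : Continuous fun x : ℝ ↦ x ^ (n + 1) * log x := by
    simpa only [pow_succ, mul_assoc] using (continuous_pow n).fun_mul continuous_mul_log
  have hF : ∀ x ∈ Ioo (0 : ℝ) 1, HasDerivAt
      (fun x ↦ x ^ (n + 1) * log x / (n + 1) - x ^ (n + 1) / (n + 1) ^ 2) (x ^ n * log x) x := by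
    intro x hx
    have hpow : HasDerivAt (fun x : ℝ ↦ x ^ (n + 1)) ((n + 1) * x ^ n) x := by
      simpa using hasDerivAt_pow (n + 1) x
    have hx0 : x ≠ 0 := hx.1.ne'
    refine (((hpow.fun_mul (hasDerivAt_log hx0)).div_const ((n : ℝ) + 1)).fun_sub
      (hpow.div_const (((n : ℝ) + 1) ^ 2))).congr_deriv ?_
    field_simp
    ring
  rw [integral_eq_sub_of_hasDerivAt_of_le zero_le_one (by fun_prop) hF
    ((continuous_pow n).intervalIntegrable_mul_log 0 1)]
  simp [neg_div]

noncomputable def theta (s t : ℕ) : ℝ := ∫ x in (0 : ℝ)..1, x ^ s * (1 - x) ^ t * log x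

lemma theta_zero_right (s : ℕ) : theta s 0 = -1 / (s + 1) ^ 2 := by
  simpa [theta] using integral_pow_mul_log s

lemma theta_succ_right (s t : ℕ) : theta s (t + 1) = theta s t - theta (s + 1) t := by
  have hs : Continuous fun x : ℝ ↦ x ^ s * (1 - x) ^ t := by fun_prop
  have hs' : Continuous fun x : ℝ ↦ x ^ (s + 1) * (1 - x) ^ t := by fun_prop
  rw [theta, theta, theta, ← integral_sub (hs.intervalIntegrable_mul_log 0 1)
    (hs'.intervalIntegrable_mul_log 0 1)]
  congr 1
  ext x
  ring

noncomputable def thetaClosedForm (s t : ℕ) : ℝ :=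
  -((s.factorial * t.factorial : ℝ) / ((s + t + 1).factorial : ℝ)) * (xi (s + t + 1) - xi s)

lemma thetaClosedForm_zero_right (s : ℕ) : thetaClosedForm s 0 = -1 / (s + 1) ^ 2 := by
  rw [thetaClosedForm, add_zero, xi_succ, Nat.factorial_succ, Nat.factorial_zero]
  push_cast
  field_simp
  ring

lemma thetaClosedForm_succ_right (s t : ℕ) :
    thetaClosedForm s (t + 1) = thetaClosedForm s t - thetaClosedForm (s + 1) t := by
  simp only [thetaClosedForm, show s + (t + 1) + 1 = s + t + 1 + 1 by ring,
    show s + 1 + t + 1 = s + t + 1 + 1 by ring, xi_succ, Nat.factorial_succ]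
  push_cast
  field_simp
  ring

/-- for all integers `s, t ≥ 0`,
`θ(s, t) = ∫₀¹ xˢ (1−x)ᵗ log x dx = −(s!·t!/(s+t+1)!)·(ξ_{s+t+1} − ξ_s)`. -/
theorem theta_eq_harmonic (s t : ℕ) :
    ∫ x in (0:ℝ)..1, x ^ s * (1 - x) ^ t * Real.log x =
      -((s.factorial * t.factorial : ℝ) / ((s + t + 1).factorial : ℝ)) *
        (xi (s + t + 1) - xi s) := by
  show theta s t = thetaClosedForm s t
  induction t generalizing s with
  | zero => rw [theta_zero_right, thetaClosedForm_zero_right]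
  | succ t ih => rw [theta_succ_right, thetaClosedForm_succ_right, ih, ih]
end

section
/- For all integers s ≥ 2 and t with 1 ≤ t ≤ s−1, the function φ(s, t) = t·(ξ_s − ξ_t) + (s−t)·(ξ_s − ξ_{s−t}) satisfies φ(s, t) ≤ s · log 2, where ξ_n = Σ_{j=1}^n 1/j is the n-th harmonic number. -/
open Real

lemma xi_eq_harmonic (n : ℕ) : xi n = harmonic n := by
  simp [xi, harmonic, one_div]

lemma xi_sub_xi_le_log_div {m n : ℕ} (hm : m ≠ 0) (hmn : m ≤ n) :
    xi n - xi m ≤ log (n / m) := by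
  have hn : n ≠ 0 := by omega
  have h := strictAnti_eulerMascheroniSeq'.antitone hmn
  simp only [eulerMascheroniSeq', hm, hn, if_false] at h
  rw [xi_eq_harmonic, xi_eq_harmonic, log_div (by exact_mod_cast hn) (by exact_mod_cast hm)]
  linarith

lemma mul_log_div_add_mul_log_div_le_mul_log_two {a b : ℝ} (hab : 0 ≤ a + b) :
    a * log ((a + b) / a) + b * log ((a + b) / b) ≤ (a + b) * log 2 := by
  rcases hab.eq_or_lt with hab | hab
  · simp [← hab]
  have hp : 1 - a / (a + b) = b / (a + b) := by field_simp; ring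
  calc a * log ((a + b) / a) + b * log ((a + b) / b)
      = (a + b) * binEntropy (a / (a + b)) := by
        rw [binEntropy, hp, inv_div, inv_div]
        field_simp
    _ ≤ (a + b) * log 2 := by gcongr; exact binEntropy_le_log_two

theorem phi_le_s_log_two_general (s t : ℕ) (ht1 : 1 ≤ t) (hts : t ≤ s - 1) :
    (t : ℝ) * (xi s - xi t) + ((s : ℝ) - (t : ℝ)) * (xi s - xi (s - t)) ≤
      (s : ℝ) * Real.log 2 := by
  have hts' : t < s := by omega
  have hcast : ((s - t : ℕ) : ℝ) = s - t := Nat.cast_sub hts'.le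
  have hst : (0 : ℝ) ≤ s - t := sub_nonneg.2 (by exact_mod_cast hts'.le)
  calc (t : ℝ) * (xi s - xi t) + ((s : ℝ) - t) * (xi s - xi (s - t))
      ≤ t * log (s / t) + (s - t) * log (s / (s - t)) := by
        gcongr
        · exact xi_sub_xi_le_log_div (by omega) hts'.le
        · rw [← hcast]; exact xi_sub_xi_le_log_div (by omega) (Nat.sub_le s t)
    _ ≤ s * log 2 := by
        simpa using mul_log_div_add_mul_log_div_le_mul_log_two (a := t) (b := s - t) (by simp)

/-- for integers `s ≥ 2` and `1 ≤ t ≤ s−1`,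
`φ(s, t) = t·(ξ_s − ξ_t) + (s−t)·(ξ_s − ξ_{s−t}) ≤ s·log 2`. -/
theorem phi_le_s_log_two (s t : ℕ) (hs : 2 ≤ s) (ht1 : 1 ≤ t) (hts : t ≤ s - 1) :
    (t : ℝ) * (xi s - xi t) + ((s : ℝ) - (t : ℝ)) * (xi s - xi (s - t)) ≤
      (s : ℝ) * Real.log 2 :=
  phi_le_s_log_two_general s t ht1 hts
end

section
/- Let I be a finite set, α a partition of I, β a partition strictly finer than α, and q a probability vector on α with q_A > 0 for all A ∈ α. Let P be the random extension of q built by normalizing independent rate-1 exponential random variables within each atom of α (P(B) = q_A · (Σ_{i∈B} G_i)/(Σ_{i∈A} G_i) for B ∈ β, B ⊆ A ∈ α), and set Δ^q(β, P) = Σ_{A∈α} q_A·log N^β(A) + Σ_{B∈β} P(B)·log(P(B)/q_{A^B}). Let β_{0,K} = (β_k : k = 0,…,K), K = |β| − |α|, be any dyadic sequence of partitions from α to β, and define for k = 0,…,K−1: G_k = q_{A^k}·log max{N^β(B̄^k), N^β(B^k∖B̄^k)} + log 2 + min{−q_{A^k}·log q_{A^k}, e⁻¹}, H_k = q_{A^k}·log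 N^β(B^k) + min{−q_{A^k}·log q_{A^k}, e⁻¹}, L_k = (q_{A^k}/|A^k|)·(|B̄^k|·(ξ_{|B^k|} − ξ_{|B̄^k|}) + |B^k∖B̄^k|·(ξ_{|B^k|} − ξ_{|B^k∖B̄^k|})), and ζ_k = max{G_k, H_k + L_k}. Then for all λ > 0, P(Δ^q(β, P) ≤ E(Δ^q(β, P)) − λ) ≤ exp(−λ² / (2·Σ_{k=0}^{K−1} ζ_k²)). -/
/-!
The proof rests on `Δ` being bounded. Inside an atom `A` of `α` the masses `P(B)`, `B ⊆ A`, form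
a measure of total mass `q_A` on `N^β(A)` points, so by Gibbs' inequality their relative-entropy
term lies in `[-q_A log N^β(A), 0]`. Hence `0 ≤ Δ ≤ C := Σ_A q_A log N^β(A)` almost surely, and
Hoeffding's lemma bounds the lower tail by `exp(-2λ²/C²)`. It remains to show `C² ≤ Σ_k ζ_k²`.
By Cauchy–Schwarz `C² ≤ Σ_A q_A log² N^β(A)`. Each `ζ_k ≥ log 2`, and at the step `k` that splits
the atom `A` itself, `ζ_k ≥ q_A log N^β(A) + (1 - q_A) log 2`, since one of the two halves carries
at least half of the `β`-atoms. The elementary inequality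
`q log² N ≤ (q log N + (1 - q) log 2)² + (N - 2) log² 2` then spreads `q_A log² N^β(A)` over the
`N^β(A) - 1` steps inside `A`.
-/

open Finset MeasureTheory ProbabilityTheory

open Real

lemma log_le_div_exp_one {x : ℝ} (hx : 0 < x) : log x ≤ x / exp 1 := by
  have h := log_le_sub_one_of_pos (div_pos hx (exp_pos 1))
  rw [log_div hx.ne' (exp_pos 1).ne', log_exp] at h
  linarith

lemma sq_log_le_of_four_le {N : ℝ} (hN : 4 ≤ N) : log N ^ 2 ≤ 4 * (N - 2) * log 2 ^ 2 := by
  have hN0 : 0 < N := by linarith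
  have hsqrt : log N ≤ 2 * (√N / exp 1) := by
    rw [show log N = 2 * log √N by rw [log_sqrt hN0.le]; ring]
    gcongr
    exact log_le_div_exp_one (sqrt_pos.2 hN0)
  have hlog : 0 ≤ log N := log_nonneg (by linarith)
  have he := exp_one_gt_d9
  have hl2 := log_two_gt_d9
  calc log N ^ 2 ≤ (2 * (√N / exp 1)) ^ 2 := by gcongr
    _ = 4 * N / exp 1 ^ 2 := by rw [mul_pow, div_pow, sq_sqrt hN0.le]; ring
    _ ≤ 4 * (N - 2) * log 2 ^ 2 := by
      rw [div_le_iff₀ (by positivity)]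
      have : 1.8 ≤ exp 1 * log 2 := by nlinarith
      have : (2 : ℝ) ≤ (exp 1 * log 2) ^ 2 := by nlinarith
      nlinarith

lemma mul_sq_log_le {N q z : ℝ} (hN : 2 ≤ N) (hq0 : 0 ≤ q) (hq1 : q ≤ 1)
    (hz : q * log N + (1 - q) * log 2 ≤ z) : q * log N ^ 2 ≤ z ^ 2 + (N - 2) * log 2 ^ 2 := by
  set a := log N
  set b := log 2
  have hb : 0 < b := log_pos one_lt_two
  have hba : b ≤ a := log_le_log two_pos hN
  have hz2 : (q * a + (1 - q) * b) ^ 2 ≤ z ^ 2 := pow_le_pow_left₀ (by nlinarith) hz 2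
  suffices q * (1 - q) * (a * (a - 2 * b)) ≤ (N - 2) * b ^ 2 by nlinarith [sq_nonneg ((1 - q) * b)]
  have hq : 0 ≤ q * (1 - q) := mul_nonneg hq0 (by linarith)
  rcases le_or_gt a (2 * b) with hab | hab
  · have : a * (a - 2 * b) ≤ 0 := mul_nonpos_of_nonneg_of_nonpos (by linarith) (by linarith)
    nlinarith [mul_nonneg (by linarith : (0 : ℝ) ≤ N - 2) (sq_nonneg b)]
  · have hN4 : 4 ≤ N := by
      by_contra! h
      have : a ≤ 2 * b := by
        rw [← log_rpow two_pos]; norm_num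
        exact log_le_log (by linarith) h.le
      linarith
    have h4 : q * (1 - q) ≤ 1 / 4 := by nlinarith [sq_nonneg (q - 1 / 2)]
    have := sq_log_le_of_four_le hN4
    nlinarith [mul_nonneg (by linarith : (0 : ℝ) ≤ a) (by linarith : (0 : ℝ) ≤ a - 2 * b)]

lemma log_natCast_add_le (m n : ℕ) : log ((m + n : ℕ) : ℝ) ≤ log 2 + log (max m n : ℕ) := by
  rcases Nat.eq_zero_or_pos (max m n) with h | h
  · have : m + n = 0 := by omega
    simp [this, h, log_nonneg one_le_two]
  · rw [← log_mul two_ne_zero (Nat.cast_pos.2 h).ne']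
    exact log_le_log (by exact_mod_cast (show 0 < m + n by omega)) (by norm_cast; omega)

lemma max_log_two_le_mul_log_max {q : ℝ} (hq0 : 0 ≤ q) (hq1 : q ≤ 1) (m n : ℕ) :
    max (log 2) (q * log (m + n : ℕ) + (1 - q) * log 2) ≤
      q * log (max m n : ℕ) + log 2 + min (-q * log q) (exp 1)⁻¹ := by
  have hmin : 0 ≤ min (-q * log q) (exp 1)⁻¹ := le_min (negMulLog_nonneg hq0 hq1) (by positivity)
  have hmax : 0 ≤ log (max m n : ℕ) := log_natCast_nonneg _
  have := mul_le_mul_of_nonneg_left (log_natCast_add_le m n) hq0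
  exact max_le (by nlinarith) (by nlinarith)

lemma sum_mul_log_div_nonpos {γ : Type*} {s : Finset γ} {p : γ → ℝ} {c : ℝ}
    (hp : ∀ B ∈ s, 0 ≤ p B) (hsum : ∑ B ∈ s, p B = c) :
    ∑ B ∈ s, p B * log (p B / c) ≤ 0 := by
  refine sum_nonpos fun B hB => mul_nonpos_of_nonneg_of_nonpos (hp B hB) ?_
  have hpc : p B ≤ c := hsum ▸ single_le_sum hp hB
  have hc : 0 ≤ c := (hp B hB).trans hpc
  exact log_nonpos (div_nonneg (hp B hB) hc) (div_le_one_of_le₀ hpc hc)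

lemma neg_mul_log_card_le_sum_mul_log_div {γ : Type*} {s : Finset γ} {p : γ → ℝ} {c : ℝ}
    (hp : ∀ B ∈ s, 0 < p B) (hsum : ∑ B ∈ s, p B = c) :
    -(c * log #s) ≤ ∑ B ∈ s, p B * log (p B / c) := by
  rcases s.eq_empty_or_nonempty with rfl | hs
  · simp [← hsum]
  have hc : 0 < c := hsum ▸ sum_pos hp hs
  have hn : (0 : ℝ) < #s := by exact_mod_cast hs.card_pos
  -- Gibbs' inequality, from `1 - x⁻¹ ≤ log x` at `x = #s * p B / c`
  have hterm : ∀ B ∈ s, p B - c / #s ≤ p B * log (p B / c) + p B * log #s := by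
    intro B hB
    have hpB := hp B hB
    have h := one_sub_inv_le_log_of_pos (show 0 < #s * p B / c by positivity)
    rw [log_div (by positivity) hc.ne', log_mul hn.ne' hpB.ne', inv_div] at h
    rw [log_div hpB.ne' hc.ne']
    have := mul_le_mul_of_nonneg_left h hpB.le
    field_simp at this ⊢
    linarith
  have := sum_le_sum hterm
  rw [sum_sub_distrib, sum_add_distrib, ← sum_mul, hsum, sum_const, nsmul_eq_mul,
    mul_div_cancel₀ _ hn.ne'] at this
  linarith

lemma sq_sum_mul_le_sum_mul_sq {ι : Type*} {s : Finset ι} {q x : ι → ℝ}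
    (hq0 : ∀ i ∈ s, 0 ≤ q i) (hq1 : ∑ i ∈ s, q i ≤ 1) :
    (∑ i ∈ s, q i * x i) ^ 2 ≤ ∑ i ∈ s, q i * x i ^ 2 :=
  (sum_sq_le_sum_mul_sum_of_sq_le_mul s hq0 (fun i hi => mul_nonneg (hq0 i hi) (sq_nonneg _))
    fun i _ => le_of_eq (by ring)).trans
    (mul_le_of_le_one_left (sum_nonneg fun i hi => mul_nonneg (hq0 i hi) (sq_nonneg _)) hq1)

lemma sq_sum_mul_log_le_sum_sq {ι : Type*} (s : Finset ι) (q : ι → ℝ) (N : ι → ℕ)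
    (K : ℕ) (ζ : ℕ → ℝ) (g : ℕ → ι)
    (hq0 : ∀ A ∈ s, 0 ≤ q A) (hq1 : ∑ A ∈ s, q A ≤ 1) (hK : ∑ A ∈ s, (N A - 1) ≤ K)
    (hζ : ∀ k < K, log 2 ≤ ζ k)
    (hsplit : ∀ A ∈ s, 2 ≤ N A →
      ∃ k < K, g k = A ∧ q A * log (N A) + (1 - q A) * log 2 ≤ ζ k) :
    (∑ A ∈ s, q A * log (N A)) ^ 2 ≤ ∑ k ∈ range K, ζ k ^ 2 := by
  set s₂ := s.filter (fun A => 2 ≤ N A)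
  choose! k hkK hgk hζk using hsplit
  have hs₂ : s₂ ⊆ s := filter_subset _ _
  have hlog2 : 0 ≤ log 2 := log_nonneg one_le_two
  have hC : ∑ A ∈ s, q A * log (N A) = ∑ A ∈ s₂, q A * log (N A) := by
    refine (sum_filter_of_ne fun A _ hA => ?_).symm
    by_contra hN
    interval_cases h : N A <;> simp at hA
  have hCS : (∑ A ∈ s₂, q A * log (N A)) ^ 2 ≤ ∑ A ∈ s₂, q A * log (N A) ^ 2 :=
    sq_sum_mul_le_sum_mul_sq (fun A hA => hq0 A (hs₂ hA))
      ((sum_le_sum_of_subset_of_nonneg hs₂ fun A hA _ => hq0 A hA).trans hq1)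
  have hatom : ∀ A ∈ s₂,
      q A * log (N A) ^ 2 ≤ (ζ (k A) ^ 2 - log 2 ^ 2) + ((N A : ℝ) - 1) * log 2 ^ 2 := by
    intro A hA
    obtain ⟨hAs, hNA⟩ := mem_filter.1 hA
    have := mul_sq_log_le (by exact_mod_cast hNA : (2 : ℝ) ≤ N A) (hq0 A hAs)
      ((single_le_sum hq0 hAs).trans hq1) (hζk A hAs hNA)
    linarith
  have hsteps : ∑ A ∈ s₂, (ζ (k A) ^ 2 - log 2 ^ 2) ≤ ∑ i ∈ range K, (ζ i ^ 2 - log 2 ^ 2) := by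
    have hinj : Set.InjOn k s₂ := fun A hA B hB h => by
      rw [← hgk A (hs₂ hA) (mem_filter.1 hA).2, ← hgk B (hs₂ hB) (mem_filter.1 hB).2, h]
    rw [← sum_image (f := fun i => ζ i ^ 2 - log 2 ^ 2) hinj]
    refine sum_le_sum_of_subset_of_nonneg ?_ fun i hi _ => ?_
    · exact image_subset_iff.2 fun A hA => mem_range.2 (hkK A (hs₂ hA) (mem_filter.1 hA).2)
    · exact sub_nonneg.2 (pow_le_pow_left₀ hlog2 (hζ i (mem_range.1 hi)) 2)
  have hcount : ∑ A ∈ s₂, ((N A : ℝ) - 1) ≤ K := by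
    have h : ∑ A ∈ s₂, (N A - 1) ≤ K := (sum_le_sum_of_subset hs₂).trans hK
    rw [← Nat.cast_le (α := ℝ), Nat.cast_sum] at h
    refine le_of_eq_of_le (sum_congr rfl fun A hA => ?_) h
    rw [Nat.cast_sub (one_le_two.trans (mem_filter.1 hA).2), Nat.cast_one]
  calc (∑ A ∈ s, q A * log (N A)) ^ 2 ≤ ∑ A ∈ s₂, q A * log (N A) ^ 2 := hC ▸ hCS
    _ ≤ ∑ A ∈ s₂, (ζ (k A) ^ 2 - log 2 ^ 2) + (∑ A ∈ s₂, ((N A : ℝ) - 1)) * log 2 ^ 2 := by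
        rw [sum_mul, ← sum_add_distrib]; exact sum_le_sum hatom
    _ ≤ ∑ i ∈ range K, (ζ i ^ 2 - log 2 ^ 2) + K * log 2 ^ 2 := by
        gcongr
    _ = ∑ k ∈ range K, ζ k ^ 2 := by simp [sum_sub_distrib]

lemma measure_le_integral_sub_le_of_mem_Icc {Ω : Type*} [MeasurableSpace Ω] {μ : Measure Ω}
    [IsProbabilityMeasure μ] {X : Ω → ℝ} {a b ε : ℝ} (hX : AEMeasurable X μ)
    (hb : ∀ᵐ ω ∂μ, X ω ∈ Set.Icc a b) (hε : 0 ≤ ε) :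
    μ {ω | X ω ≤ μ[X] - ε} ≤ ENNReal.ofReal (exp (-2 * ε ^ 2 / (b - a) ^ 2)) := by
  have hneg : ∀ᵐ ω ∂μ, (-X) ω ∈ Set.Icc (-b) (-a) := by
    filter_upwards [hb] with ω h using ⟨neg_le_neg h.2, neg_le_neg h.1⟩
  have h := (hasSubgaussianMGF_of_mem_Icc hX.neg hneg).measure_ge_le hε
  have hset : {ω | X ω ≤ μ[X] - ε} = {ω | ε ≤ (-X) ω - μ[-X]} := by
    ext ω
    simp only [Set.mem_ofPred_eq, Pi.neg_apply, integral_neg]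
    constructor <;> intro <;> linarith
  rw [hset, ← ofReal_measureReal]
  refine ENNReal.ofReal_le_ofReal (h.trans_eq ?_)
  congr 1
  simp only [NNReal.coe_pow, NNReal.coe_div, coe_nnnorm, Real.norm_eq_abs, NNReal.coe_ofNat]
  rw [div_pow, sq_abs, show -a - -b = b - a by ring]
  generalize (b - a) ^ 2 = d
  ring

lemma measure_le_integral_sub_le_of_mem_Icc_of_sq_le {Ω : Type*} [MeasurableSpace Ω]
    {μ : Measure Ω} [IsProbabilityMeasure μ] {X : Ω → ℝ} {c σ ε : ℝ} (hX : AEMeasurable X μ)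
    (hb : ∀ᵐ ω ∂μ, X ω ∈ Set.Icc 0 c) (hc : c ^ 2 ≤ σ) (hε : 0 ≤ ε) :
    μ {ω | X ω ≤ μ[X] - ε} ≤ ENNReal.ofReal (exp (-ε ^ 2 / (2 * σ))) := by
  have hσ : 0 ≤ σ := (sq_nonneg c).trans hc
  refine (measure_le_integral_sub_le_of_mem_Icc hX (b := √σ) (hb.mono fun ω h =>
    ⟨h.1, h.2.trans ((le_abs_self c).trans (abs_le_sqrt hc))⟩) hε).trans ?_
  rw [sub_zero, sq_sqrt hσ]
  refine ENNReal.ofReal_le_ofReal (exp_le_exp.2 ?_)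
  have : 0 ≤ ε ^ 2 / σ := by positivity
  calc -2 * ε ^ 2 / σ = -2 * (ε ^ 2 / σ) := by ring
    _ ≤ -(ε ^ 2 / σ) / 2 := by linarith
    _ = -ε ^ 2 / (2 * σ) := by ring

lemma ae_pos_of_map_eq_expMeasure {Ω : Type*} [MeasurableSpace Ω] {μ : Measure Ω} {g : Ω → ℝ}
    (hg : Measurable g) (h : μ.map g = expMeasure 1) : ∀ᵐ ω ∂μ, 0 < g ω := by
  have hIic : expMeasure 1 (Set.Iic 0) = 0 := by
    rw [expMeasure, gammaMeasure, withDensity_apply _ measurableSet_Iic,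
      setLIntegral_congr Iio_ae_eq_Iic.symm]
    exact lintegral_gammaPDF_of_nonpos le_rfl
  rw [← h, Measure.map_apply hg measurableSet_Iic] at hIic
  rw [ae_iff]
  simp only [not_lt]
  exact hIic

-- The paper's `N^β(S)`.
abbrev atomCount {I : Type*} [DecidableEq I] (β : Finset (Finset I)) (S : Finset I) : ℕ :=
  #(β.filter fun B => B ⊆ S)

namespace IsPartition

variable {I : Type*} [Fintype I] [DecidableEq I] {α β : Finset (Finset I)}

lemma eq_of_subset (hα : IsPartition α) {A A' S : Finset I} (hA : A ∈ α) (hA' : A' ∈ α)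
    (hS : S.Nonempty) (h : S ⊆ A) (h' : S ⊆ A') : A = A' := by
  by_contra hne
  exact hS.ne_empty (disjoint_self_iff_empty S |>.1 ((hα.2.1 A hA A' hA' hne).mono h h'))

lemma atomCount_self (hβ : IsPartition β) {B : Finset I} (hB : B ∈ β) : atomCount β B = 1 := by
  rw [card_eq_one]
  refine ⟨B, eq_singleton_iff_unique_mem.2 ⟨mem_filter.2 ⟨hB, subset_rfl⟩, fun C hC => ?_⟩⟩
  obtain ⟨hCβ, hCB⟩ := mem_filter.1 hC
  exact hβ.eq_of_subset hCβ hB (hβ.1 C hCβ) subset_rfl hCB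

lemma biUnion_filter_subset (hα : IsPartition α) (hβ : IsPartition β)
    (hfine : ∀ B ∈ β, ∃ A ∈ α, B ⊆ A) {A : Finset I} (hA : A ∈ α) :
    (β.filter fun B => B ⊆ A).biUnion id = A := by
  refine Subset.antisymm (biUnion_subset.2 fun B hB => (mem_filter.1 hB).2) fun i hi => ?_
  obtain ⟨B, hB, hiB⟩ := hβ.2.2 i
  obtain ⟨A', hA', hBA'⟩ := hfine B hB
  obtain rfl := hα.eq_of_subset hA' hA (singleton_nonempty i)
    (singleton_subset_iff.2 (hBA' hiB)) (singleton_subset_iff.2 hi)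
  exact mem_biUnion.2 ⟨B, mem_filter.2 ⟨hB, hBA'⟩, hiB⟩

lemma sum_filter_subset_sum {M : Type*} [AddCommMonoid M] (hα : IsPartition α)
    (hβ : IsPartition β) (hfine : ∀ B ∈ β, ∃ A ∈ α, B ⊆ A) {A : Finset I} (hA : A ∈ α)
    (f : I → M) : ∑ B ∈ β.filter (fun B => B ⊆ A), ∑ i ∈ B, f i = ∑ i ∈ A, f i := by
  conv_rhs => rw [← hα.biUnion_filter_subset hβ hfine hA]
  refine (sum_biUnion fun B hB B' hB' hne => hβ.2.1 B ?_ B' ?_ hne).symm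
  · exact (mem_filter.1 hB).1
  · exact (mem_filter.1 hB').1

lemma one_le_atomCount (hα : IsPartition α) (hβ : IsPartition β)
    (hfine : ∀ B ∈ β, ∃ A ∈ α, B ⊆ A) {A : Finset I} (hA : A ∈ α) : 1 ≤ atomCount β A := by
  have hne := hα.1 A hA
  rw [← hα.biUnion_filter_subset hβ hfine hA, biUnion_nonempty] at hne
  obtain ⟨B, hB, -⟩ := hne
  exact card_pos.2 ⟨B, hB⟩

lemma card_eq_sum_atomCount (hα : IsPartition α) (hβ : IsPartition β)
    (hfine : ∀ B ∈ β, ∃ A ∈ α, B ⊆ A) : #β = ∑ A ∈ α, atomCount β A := by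
  have hβ_eq : β = α.biUnion fun A => β.filter fun B => B ⊆ A := by
    ext B
    simp only [mem_biUnion, mem_filter]
    exact ⟨fun hB => (hfine B hB).imp fun A ⟨hA, hBA⟩ => ⟨hA, hB, hBA⟩, fun ⟨_, _, hB, _⟩ => hB⟩
  conv_lhs => rw [hβ_eq]
  refine card_biUnion fun A hA A' hA' hne => disjoint_left.2 fun B hB hB' => hne ?_
  obtain ⟨hBβ, hBA⟩ := mem_filter.1 hB
  exact hα.eq_of_subset hA hA' (hβ.1 B hBβ) hBA (mem_filter.1 hB').2

lemma sum_atomCount_sub_one (hα : IsPartition α) (hβ : IsPartition β)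
    (hfine : ∀ B ∈ β, ∃ A ∈ α, B ⊆ A) : ∑ A ∈ α, (atomCount β A - 1) = #β - #α := by
  rw [sum_tsub_distrib _ fun A hA => hα.one_le_atomCount hβ hfine hA,
    ← hα.card_eq_sum_atomCount hβ hfine, card_eq_sum_ones α]

lemma sum_mul_log_div_mem_Icc (hα : IsPartition α) (hβ : IsPartition β)
    (hfine : ∀ B ∈ β, ∃ A ∈ α, B ⊆ A) {A : Finset I} (hA : A ∈ α) {g : I → ℝ}
    (hg : ∀ i, 0 < g i) {p : Finset I → ℝ} {c : ℝ} (hc : 0 < c)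
    (hp : ∀ S ⊆ A, p S = c * (∑ i ∈ S, g i) / ∑ i ∈ A, g i) :
    ∑ B ∈ β.filter (fun B => B ⊆ A), p B * log (p B / c) ∈
      Set.Icc (-(c * log (atomCount β A))) 0 := by
  have hpos : ∀ B ∈ β.filter (fun B => B ⊆ A), 0 < p B := fun B hB => by
    obtain ⟨hBβ, hBA⟩ := mem_filter.1 hB
    rw [hp B hBA]
    exact div_pos (mul_pos hc (sum_pos (fun i _ => hg i) (hβ.1 B hBβ)))
      (sum_pos (fun i _ => hg i) (hα.1 A hA))
  have hsum : ∑ B ∈ β.filter (fun B => B ⊆ A), p B = c := by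
    rw [sum_congr rfl fun B hB => hp B (mem_filter.1 hB).2, ← sum_div, ← mul_sum,
      hα.sum_filter_subset_sum hβ hfine hA,
      mul_div_cancel_right₀ _ (sum_pos (fun i _ => hg i) (hα.1 A hA)).ne']
  exact ⟨neg_mul_log_card_le_sum_mul_log_div hpos hsum,
    sum_mul_log_div_nonpos (fun B hB => (hpos B hB).le) hsum⟩

lemma sum_mul_log_add_sum_mem_Icc (hα : IsPartition α) (hβ : IsPartition β)
    (hfine : ∀ B ∈ β, ∃ A ∈ α, B ⊆ A) {q : Finset I → ℝ} (hq0 : ∀ A ∈ α, 0 < q A)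
    {g : I → ℝ} (hg : ∀ i, 0 < g i) {p : Finset I → ℝ}
    (hp : ∀ A ∈ α, ∀ S ⊆ A, p S = q A * (∑ i ∈ S, g i) / ∑ i ∈ A, g i) :
    ∑ A ∈ α, q A * log (atomCount β A) +
        ∑ A ∈ α, ∑ B ∈ β.filter (fun B => B ⊆ A), p B * log (p B / q A) ∈
      Set.Icc 0 (∑ A ∈ α, q A * log (atomCount β A)) := by
  have hterm := fun A hA => hα.sum_mul_log_div_mem_Icc hβ hfine hA hg (hq0 A hA) (hp A hA)
  have hlow := sum_le_sum fun A hA => (hterm A hA).1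
  have hupp := sum_le_sum fun A hA => (hterm A hA).2
  rw [sum_neg_distrib] at hlow
  rw [sum_const_zero] at hupp
  constructor <;> linarith

end IsPartition

structure IsDyadicSeq {I : Type*} [DecidableEq I] (α β : Finset (Finset I)) (K : ℕ)
    (βs : ℕ → Finset (Finset I)) (B Bbar : ℕ → Finset I) : Prop where
  zero : βs 0 = α
  last : βs K = β
  mem : ∀ k < K, B k ∈ βs k
  split : ∀ k < K, Bbar k ⊆ B k ∧ (Bbar k).Nonempty ∧ (B k \ Bbar k).Nonempty
  succ : ∀ k < K, βs (k + 1) = insert (Bbar k) (insert (B k \ Bbar k) ((βs k).erase (B k)))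

namespace IsDyadicSeq

variable {I : Type*} [DecidableEq I] {α β : Finset (Finset I)} {K : ℕ}
  {βs : ℕ → Finset (Finset I)} {B Bbar : ℕ → Finset I}

lemma mem_succ_iff (h : IsDyadicSeq α β K βs B Bbar) {k : ℕ} (hk : k < K) {C : Finset I} :
    C ∈ βs (k + 1) ↔ C = Bbar k ∨ C = B k \ Bbar k ∨ (C ≠ B k ∧ C ∈ βs k) := by
  rw [h.succ k hk, mem_insert, mem_insert, mem_erase]

lemma pairwiseDisjoint [Fintype I] (h : IsDyadicSeq α β K βs B Bbar) (hα : IsPartition α)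
    {k : ℕ} (hk : k ≤ K) : (βs k : Set (Finset I)).PairwiseDisjoint id := by
  induction k with
  | zero => exact h.zero ▸ fun A hA A' hA' hne => hα.2.1 A hA A' hA' hne
  | succ k ih =>
    have hkK : k < K := by omega
    have ih := ih hkK.le
    have hdisj : ∀ C ∈ (βs k).erase (B k), Disjoint (B k) C := fun C hC =>
      ih (h.mem k hkK) (mem_erase.1 hC).2 (mem_erase.1 hC).1.symm
    rw [h.succ k hkK, coe_insert, coe_insert]
    refine (ih.subset (coe_subset.2 (erase_subset _ _))).insert
      (fun C hC _ => (hdisj C hC).mono_left sdiff_subset) |>.insert fun C hC _ => ?_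
    rcases hC with rfl | hC
    · exact disjoint_sdiff
    · exact (hdisj C hC).mono_left (h.split k hkK).1

lemma exists_superset (h : IsDyadicSeq α β K βs B Bbar) {k : ℕ} (hk : k ≤ K) {C : Finset I}
    (hC : C ∈ β) : ∃ D ∈ βs k, C ⊆ D := by
  refine Nat.decreasingInduction (motive := fun k _ => ∃ D ∈ βs k, C ⊆ D)
    (fun k hk ⟨D, hD, hCD⟩ => ?_) ⟨C, h.last ▸ hC, subset_rfl⟩ hk
  rcases (h.mem_succ_iff hk).1 hD with rfl | rfl | ⟨-, hD⟩
  · exact ⟨B k, h.mem k hk, hCD.trans (h.split k hk).1⟩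
  · exact ⟨B k, h.mem k hk, hCD.trans sdiff_subset⟩
  · exact ⟨D, hD, hCD⟩

lemma atomCount_add [Fintype I] (h : IsDyadicSeq α β K βs B Bbar) (hα : IsPartition α)
    (hβ : IsPartition β) {k : ℕ} (hk : k < K) :
    atomCount β (Bbar k) + atomCount β (B k \ Bbar k) = atomCount β (B k) := by
  rw [← card_union_of_disjoint (disjoint_filter.2 fun C hC h₁ h₂ =>
    (hβ.1 C hC).ne_empty (disjoint_self_iff_empty C |>.1 (disjoint_sdiff.mono h₁ h₂))),
    ← filter_or]
  congr 1
  refine filter_congr fun C hC => ⟨fun h' => ?_, ?_⟩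
  · rcases h' with h' | h'
    · exact h'.trans (h.split k hk).1
    · exact h'.trans sdiff_subset
  · intro hCB
    obtain ⟨D, hD, hCD⟩ := h.exists_superset (k := k + 1) hk hC
    rcases (h.mem_succ_iff hk).1 hD with rfl | rfl | ⟨hne, hD⟩
    · exact Or.inl hCD
    · exact Or.inr hCD
    · exact absurd ((h.pairwiseDisjoint hα hk.le hD (h.mem k hk) hne).mono hCD hCB)
        fun hd => (hβ.1 C hC).ne_empty (disjoint_self_iff_empty C |>.1 hd)

lemma exists_eq_of_two_le_atomCount [Fintype I] (h : IsDyadicSeq α β K βs B Bbar)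
    (hβ : IsPartition β) {A : Finset I} (hA : A ∈ α) (h2 : 2 ≤ atomCount β A) :
    ∃ k < K, B k = A := by
  by_contra! hne
  have hstay : ∀ k ≤ K, A ∈ βs k := by
    intro k hk
    induction k with
    | zero => exact h.zero ▸ hA
    | succ k ih =>
      exact (h.mem_succ_iff (by omega)).2 (Or.inr (Or.inr ⟨(hne k (by omega)).symm, ih (by omega)⟩))
  have := hβ.atomCount_self (h.last ▸ hstay K le_rfl)
  omega

lemma sq_sum_mul_log_atomCount_le_sum_sq [Fintype I] {Ak : ℕ → Finset I}
    (h : IsDyadicSeq α β K βs B Bbar) (hα : IsPartition α) (hβ : IsPartition β)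
    (hfine : ∀ B ∈ β, ∃ A ∈ α, B ⊆ A) (hK : #β - #α ≤ K) (hAk : ∀ k < K, Ak k ∈ α ∧ B k ⊆ Ak k)
    {q : Finset I → ℝ} (hq0 : ∀ A ∈ α, 0 ≤ q A) (hq1 : ∑ A ∈ α, q A ≤ 1) {ζ : ℕ → ℝ}
    (hζ : ∀ k < K,
      max (log 2) (q (Ak k) * log (atomCount β (B k)) + (1 - q (Ak k)) * log 2) ≤ ζ k) :
    (∑ A ∈ α, q A * log (atomCount β A)) ^ 2 ≤ ∑ k ∈ range K, ζ k ^ 2 := by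
  refine sq_sum_mul_log_le_sum_sq α q (atomCount β) K ζ B hq0 hq1
    ((hα.sum_atomCount_sub_one hβ hfine).trans_le hK)
    (fun k hk => (le_max_left _ _).trans (hζ k hk)) fun A hA h2 => ?_
  obtain ⟨k, hk, rfl⟩ := h.exists_eq_of_two_le_atomCount hβ hA h2
  have hAkB : Ak k = B k := hα.eq_of_subset (hAk k hk).1 hA (hα.1 _ hA) (hAk k hk).2 subset_rfl
  exact ⟨k, hk, rfl, by simpa only [hAkB] using (le_max_right _ _).trans (hζ k hk)⟩

end IsDyadicSeq

theorem azuma_hoeffding_Delta_general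
    {I : Type*} [Fintype I] [DecidableEq I]
    {Ω : Type*} [MeasurableSpace Ω] (μ : Measure Ω) [IsProbabilityMeasure μ]
    (α β : Finset (Finset I)) (q : Finset I → ℝ)
    (hα : IsPartition α) (hβ : IsPartition β)
    (hfine : ∀ B ∈ β, ∃ A ∈ α, B ⊆ A)
    (hq0 : ∀ A ∈ α, 0 < q A) (hq1 : ∑ A ∈ α, q A = 1)
    (G : I → Ω → ℝ) (hGmeas : ∀ i, Measurable (G i))
    (hGexp : ∀ i, Measure.map (G i) μ = expMeasure 1)
    (P : Finset I → Ω → ℝ)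
    (hP : ∀ A ∈ α, ∀ S : Finset I, S ⊆ A → ∀ ω,
      P S ω = q A * (∑ i ∈ S, G i ω) / (∑ i ∈ A, G i ω))
    (Δ : Ω → ℝ)
    (hΔ : ∀ ω, Δ ω =
      ∑ A ∈ α, q A * Real.log ((β.filter (fun B => B ⊆ A)).card : ℝ) +
        ∑ A ∈ α, ∑ B ∈ β.filter (fun B => B ⊆ A),
          P B ω * Real.log (P B ω / q A))
    (K : ℕ) (hK : K = β.card - α.card)
    (βs : ℕ → Finset (Finset I)) (hβ0 : βs 0 = α) (hβK : βs K = β)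
    (Bk Bbar Ak : ℕ → Finset I)
    (hBk : ∀ k < K, Bk k ∈ βs k)
    (hBbar : ∀ k < K, Bbar k ⊆ Bk k ∧ (Bbar k).Nonempty ∧ (Bk k \ Bbar k).Nonempty)
    (hsplit : ∀ k < K,
      βs (k + 1) = insert (Bbar k) (insert (Bk k \ Bbar k) ((βs k).erase (Bk k))))
    (hAk : ∀ k < K, Ak k ∈ α ∧ Bk k ⊆ Ak k)
    (ζ : ℕ → ℝ)
    (hζ : ∀ k < K, ζ k = max
      (q (Ak k) * Real.log
          ((max ((β.filter (fun B => B ⊆ Bbar k)).card)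
              ((β.filter (fun B => B ⊆ Bk k \ Bbar k)).card) : ℕ) : ℝ) +
        Real.log 2 + min (-(q (Ak k)) * Real.log (q (Ak k))) (Real.exp 1)⁻¹)
      ((q (Ak k) * Real.log ((β.filter (fun B => B ⊆ Bk k)).card : ℝ) +
          min (-(q (Ak k)) * Real.log (q (Ak k))) (Real.exp 1)⁻¹) +
        (q (Ak k) / ((Ak k).card : ℝ)) *
          (((Bbar k).card : ℝ) * (xi (Bk k).card - xi (Bbar k).card) +
            ((Bk k \ Bbar k).card : ℝ) *
              (xi (Bk k).card - xi (Bk k \ Bbar k).card))))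
    (lam : ℝ) (hlam : 0 < lam) :
    μ {ω | Δ ω ≤ (∫ ω', Δ ω' ∂μ) - lam} ≤
      ENNReal.ofReal
        (Real.exp (-(lam ^ 2) / (2 * ∑ k ∈ Finset.range K, (ζ k) ^ 2))) := by
  have hseq : IsDyadicSeq α β K βs Bk Bbar := ⟨hβ0, hβK, hBk, hBbar, hsplit⟩
  have hq_le : ∀ A ∈ α, q A ≤ 1 := fun A hA => hq1 ▸ single_le_sum (fun A hA => (hq0 A hA).le) hA
  have hζ_ge : ∀ k < K, max (log 2)
      (q (Ak k) * log (atomCount β (Bk k)) + (1 - q (Ak k)) * log 2) ≤ ζ k := fun k hk => by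
    rw [← hseq.atomCount_add hα hβ hk]
    exact (max_log_two_le_mul_log_max (hq0 _ (hAk k hk).1).le (hq_le _ (hAk k hk).1) _ _).trans
      ((le_max_left _ _).trans (hζ k hk).ge)
  have hΔ_mem : ∀ᵐ ω ∂μ, Δ ω ∈ Set.Icc 0 (∑ A ∈ α, q A * log (atomCount β A)) := by
    filter_upwards [ae_all_iff.2 fun i => ae_pos_of_map_eq_expMeasure (hGmeas i) (hGexp i)]
      with ω hω
    rw [hΔ ω]
    exact hα.sum_mul_log_add_sum_mem_Icc hβ hfine hq0 hω fun A hA S hS => hP A hA S hS ω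
  have hΔ_meas : Measurable Δ := by
    rw [funext hΔ]
    refine measurable_const.add (Finset.measurable_sum _ fun A hA =>
      Finset.measurable_sum _ fun B hB => ?_)
    have hPB : Measurable (P B) := by
      rw [funext (hP A hA B (mem_filter.1 hB).2)]
      fun_prop
    exact hPB.mul (measurable_log.comp (hPB.div_const _))
  exact measure_le_integral_sub_le_of_mem_Icc_of_sq_le hΔ_meas.aemeasurable hΔ_mem
    (hseq.sq_sum_mul_log_atomCount_le_sum_sq hα hβ hfine hK.ge hAk (fun A hA => (hq0 A hA).le)
      hq1.le hζ_ge) hlam.le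

/-- Theorem 2, Azuma–Hoeffding bound: for any dyadic sequence
of partitions `β_0 = α ⪯ β_1 ⪯ … ⪯ β_K = β` and the associated martingale
increment bounds `ζ_k = max{G_k, H_k + L_k}`, for all `λ > 0`,
`ℙ(Δ^q(β,P) ≤ E(Δ^q(β,P)) − λ) ≤ exp(−λ²/(2 Σ_k ζ_k²))`. -/
theorem azuma_hoeffding_Delta
    {I : Type*} [Fintype I] [DecidableEq I]
    {Ω : Type*} [MeasurableSpace Ω] (μ : Measure Ω) [IsProbabilityMeasure μ]
    (α β : Finset (Finset I)) (q : Finset I → ℝ)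
    (hα : IsPartition α) (hβ : IsPartition β)
    (hfine : ∀ B ∈ β, ∃ A ∈ α, B ⊆ A) (hstrict : α ≠ β)
    (hq0 : ∀ A ∈ α, 0 < q A) (hq1 : ∑ A ∈ α, q A = 1)
    (G : I → Ω → ℝ) (hGmeas : ∀ i, Measurable (G i))
    (hGindep : iIndepFun G μ)
    (hGexp : ∀ i, Measure.map (G i) μ = expMeasure 1)
    (P : Finset I → Ω → ℝ)
    (hP : ∀ A ∈ α, ∀ S : Finset I, S ⊆ A → ∀ ω,
      P S ω = q A * (∑ i ∈ S, G i ω) / (∑ i ∈ A, G i ω))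
    (Δ : Ω → ℝ)
    (hΔ : ∀ ω, Δ ω =
      ∑ A ∈ α, q A * Real.log ((β.filter (fun B => B ⊆ A)).card : ℝ) +
        ∑ A ∈ α, ∑ B ∈ β.filter (fun B => B ⊆ A),
          P B ω * Real.log (P B ω / q A))
    (K : ℕ) (hK : K = β.card - α.card)
    (βs : ℕ → Finset (Finset I)) (hβ0 : βs 0 = α) (hβK : βs K = β)
    (Bk Bbar Ak : ℕ → Finset I)
    (hBk : ∀ k < K, Bk k ∈ βs k)
    (hBbar : ∀ k < K, Bbar k ⊆ Bk k ∧ (Bbar k).Nonempty ∧ (Bk k \ Bbar k).Nonempty)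
    (hsplit : ∀ k < K,
      βs (k + 1) = insert (Bbar k) (insert (Bk k \ Bbar k) ((βs k).erase (Bk k))))
    (hAk : ∀ k < K, Ak k ∈ α ∧ Bk k ⊆ Ak k)
    (ζ : ℕ → ℝ)
    (hζ : ∀ k < K, ζ k = max
      (q (Ak k) * Real.log
          ((max ((β.filter (fun B => B ⊆ Bbar k)).card)
              ((β.filter (fun B => B ⊆ Bk k \ Bbar k)).card) : ℕ) : ℝ) +
        Real.log 2 + min (-(q (Ak k)) * Real.log (q (Ak k))) (Real.exp 1)⁻¹)
      ((q (Ak k) * Real.log ((β.filter (fun B => B ⊆ Bk k)).card : ℝ) +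
          min (-(q (Ak k)) * Real.log (q (Ak k))) (Real.exp 1)⁻¹) +
        (q (Ak k) / ((Ak k).card : ℝ)) *
          (((Bbar k).card : ℝ) * (xi (Bk k).card - xi (Bbar k).card) +
            ((Bk k \ Bbar k).card : ℝ) *
              (xi (Bk k).card - xi (Bk k \ Bbar k).card))))
    (lam : ℝ) (hlam : 0 < lam) :
    μ {ω | Δ ω ≤ (∫ ω', Δ ω' ∂μ) - lam} ≤
      ENNReal.ofReal
        (Real.exp (-(lam ^ 2) / (2 * ∑ k ∈ Finset.range K, (ζ k) ^ 2))) :=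
  azuma_hoeffding_Delta_general μ α β q hα hβ hfine hq0 hq1 G hGmeas hGexp P hP Δ hΔ K hK βs hβ0 hβK
    Bk Bbar Ak hBk hBbar hsplit hAk ζ hζ lam hlam
end
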